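/- Fix p0 ∈ (0,1) and λ ∈ [0,1) with λ < min( p0/(1−p0), (1−p0)/p0 ). Let (a*, b*) be the unique global minimizer on ℝ² of L_C(a,b) = p0·( ((1+λ)/2)·s(b) + ((1−λ)/2)·s(−b) ) + (1−p0)·( ((1+λ)/2)·s(−a) + ((1−λ)/2)·s(a) ) + p0·s(a) + (1−p0)·s(−b). Then a* < 0 < b*, and consequently E(a*, b*) = 0; that is, the CCAT Bayes optimal classifier classifies both points correctly and achieves zero error, matching the Bayes error of the problem. -/

import Mathlib

noncomputable def s (x : ℝ) : ℝ := Real.log (1 + Real.exp x)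

noncomputable def LC (p0 lam a b : ℝ) : ℝ :=
  p0 * (((1 + lam) / 2) * s b + ((1 - lam) / 2) * s (-b)) +
    (1 - p0) * (((1 + lam) / 2) * s (-a) + ((1 - lam) / 2) * s a) +
    p0 * s a + (1 - p0) * s (-b)

noncomputable def E (p0 a b : ℝ) : ℝ :=
  p0 * (if a ≥ 0 then 1 else 0) + (1 - p0) * (if b ≤ 0 then 1 else 0)

/-!
Since `s (-x) = s x - x`, the loss splits as `(s a - cₐ a) + (s b - c_b b)` with
`cₐ = (1 - p₀)(1 + λ)/2` and `c_b = p₀(1 - λ)/2 + (1 - p₀)`. Each summand is minimised where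
`s' = sigmoid` equals the slope, and the bound on `λ` says exactly `cₐ < 1/2 < c_b`; as
`sigmoid 0 = 1/2` and `sigmoid` is strictly increasing, this forces `a* < 0 < b*`.
-/

open Real

lemma s_neg (x : ℝ) : s (-x) = s x - x := by
  have h : 1 + exp (-x) = (1 + exp x) * exp (-x) := by
    rw [add_mul, one_mul, ← exp_add, add_neg_cancel, exp_zero, add_comm]
  rw [s, s, h, log_mul (by positivity) (by positivity), log_exp, sub_eq_add_neg]

lemma hasDerivAt_s (x : ℝ) : HasDerivAt s (sigmoid x) x := by
  have h : exp x / (1 + exp x) = sigmoid x := by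
    rw [sigmoid_def, exp_neg]
    field_simp
    ring
  exact h ▸ ((hasDerivAt_exp x).const_add 1).log (by positivity)

lemma LC_eq_add (p0 lam a b : ℝ) :
    LC p0 lam a b = (s a - (1 - p0) * (1 + lam) / 2 * a) +
      (s b - (p0 * (1 - lam) / 2 + (1 - p0)) * b) := by
  rw [LC, s_neg a, s_neg b]
  ring

lemma sigmoid_eq_of_isLocalMin {c t : ℝ} (h : IsLocalMin (fun x => s x - c * x) t) :
    sigmoid t = c := by
  have hd : HasDerivAt (fun x => s x - c * x) (sigmoid t - c) t :=
    ((hasDerivAt_s t).sub ((hasDerivAt_id' t).const_mul c)).congr_deriv (by rw [mul_one])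
  exact sub_eq_zero.mp (h.hasDerivAt_eq_zero hd)

lemma neg_of_sigmoid_lt_half {t : ℝ} (h : sigmoid t < 2⁻¹) : t < 0 :=
  sigmoid_lt_iff.mp (sigmoid_zero ▸ h)

lemma pos_of_half_lt_sigmoid {t : ℝ} (h : 2⁻¹ < sigmoid t) : 0 < t :=
  sigmoid_lt_iff.mp (sigmoid_zero ▸ h)

theorem ccat_zero_error_general (p0 lam : ℝ) (hp0 : 0 < p0) (hp1 : p0 < 1)
    (hlam : lam < min (p0 / (1 - p0)) ((1 - p0) / p0))
    (astar bstar : ℝ)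
    (hmin : ∀ a b : ℝ, LC p0 lam astar bstar ≤ LC p0 lam a b) :
    astar < 0 ∧ 0 < bstar ∧ E p0 astar bstar = 0 := by
  have hlam_a : lam * (1 - p0) < p0 :=
    (lt_div_iff₀ (by linarith)).mp (hlam.trans_le (min_le_left _ _))
  have hlam_b : lam * p0 < 1 - p0 :=
    (lt_div_iff₀ hp0).mp (hlam.trans_le (min_le_right _ _))
  have ha : sigmoid astar = (1 - p0) * (1 + lam) / 2 :=
    sigmoid_eq_of_isLocalMin <| Filter.Eventually.of_forall fun a => by
      have := hmin a bstar
      rw [LC_eq_add, LC_eq_add] at this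
      linarith
  have hb : sigmoid bstar = p0 * (1 - lam) / 2 + (1 - p0) :=
    sigmoid_eq_of_isLocalMin <| Filter.Eventually.of_forall fun b => by
      have := hmin astar b
      rw [LC_eq_add, LC_eq_add] at this
      linarith
  have hastar : astar < 0 := neg_of_sigmoid_lt_half (by rw [ha]; linarith)
  have hbstar : 0 < bstar := pos_of_half_lt_sigmoid (by rw [hb]; linarith)
  refine ⟨hastar, hbstar, ?_⟩
  simp [E, hastar.not_ge, hbstar.not_ge]

theorem ccat_zero_error (p0 lam : ℝ) (hp0 : 0 < p0) (hp1 : p0 < 1)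
    (hlam0 : 0 ≤ lam) (hlam1 : lam < 1)
    (hlam : lam < min (p0 / (1 - p0)) ((1 - p0) / p0))
    (astar bstar : ℝ)
    (hmin : ∀ a b : ℝ, LC p0 lam astar bstar ≤ LC p0 lam a b)
    (huniq : ∀ a b : ℝ, LC p0 lam a b = LC p0 lam astar bstar → (a, b) = (astar, bstar)) :
    astar < 0 ∧ 0 < bstar ∧ E p0 astar bstar = 0 :=
  ccat_zero_error_general p0 lam hp0 hp1 hlam astar bstar hmin
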